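/- arXiv:math-ph/0410010 — 4 statements merged into one kernel-verified Lean document; each statement's English description precedes it below -/
import Mathlib

section
/- Let C be a symmetric operator on a domain D(C) in a Hilbert space H such that, in the sense of quadratic forms on D(C), C ≥ P − B, where P ≥ 0 is a selfadjoint operator and B is a bounded everywhere-defined operator. Let (ψ_α) be a family of vectors in D(C) with ψ_α → ψ as α → 0 and ⟨ψ_α, C ψ_α⟩ → 0. Then ⟨ψ, B ψ⟩ ≥ 0, ψ lies in the domain of P^{1/2}, and ‖P^{1/2} ψ‖² ≤ ⟨ψ, B ψ⟩. -/
/-!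
By the form bound, `‖P^{1/2} ψ_α‖² ≤ ⟨ψ_α, C ψ_α⟩ + ⟨ψ_α, B ψ_α⟩ → ⟨ψ, B ψ⟩`, so the vectors
`P^{1/2} ψ_α` are eventually bounded and (Banach–Alaoglu) have a weak cluster point `η`.
The graph of the closed operator `P^{1/2}` is a closed subspace, hence weakly closed, so
`(ψ, η)` lies on it: `ψ ∈ D(P^{1/2})` and `P^{1/2} ψ = η`. Weak lower semicontinuity of the
norm gives `‖η‖² ≤ ⟨ψ, B ψ⟩`.
-/

open Filter Topology InnerProductSpace

section WeakLimits

variable {ι : Type*} {𝕜 : Type*} [RCLike 𝕜] {E : Type*} [NormedAddCommGroup E]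
  [InnerProductSpace 𝕜 E]

local notation "⟪" x ", " y "⟫" => inner 𝕜 x y

/-- Banach–Alaoglu in `WeakDual 𝕜 E`, transported to `E` by the Riesz representation. -/
theorem exists_forall_tendsto_inner_of_eventually_norm_le [CompleteSpace E] {U : Ultrafilter ι}
    {f : ι → E} {M : ℝ} (hf : ∀ᶠ i in U, ‖f i‖ ≤ M) :
    ∃ η : E, ∀ v, Tendsto (fun i => ⟪v, f i⟫) U (𝓝 ⟪v, η⟫) := by
  let F : ι → WeakDual 𝕜 E := fun i => StrongDual.toWeakDual (toDual 𝕜 E (f i))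
  have hF : ∀ᶠ i in U, F i ∈ WeakDual.toStrongDual ⁻¹' Metric.closedBall 0 M := by
    filter_upwards [hf] with i hi
    simpa [F] using hi
  obtain ⟨L, -, hL⟩ := (WeakDual.isCompact_closedBall (0 : StrongDual 𝕜 E) M).ultrafilter_le_nhds
    (U.map F) (by rwa [Ultrafilter.coe_map, le_principal_iff])
  refine ⟨(toDual 𝕜 E).symm (WeakDual.toStrongDual L), fun v => ?_⟩
  have hLv : Tendsto (fun i => ⟪f i, v⟫) U (𝓝 (L v)) := by
    simpa [F, Function.comp_def] using ((WeakDual.eval_continuous v).tendsto L).comp hL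
  rw [← inner_conj_symm, toDual_symm_apply]
  simpa [Function.comp_def, inner_conj_symm] using (RCLike.continuous_conj.tendsto _).comp hLv

theorem Submodule.mem_of_forall_tendsto_inner (K : Submodule 𝕜 E) [K.HasOrthogonalProjection]
    {l : Filter ι} [l.NeBot] {z : ι → E} {x : E} (hz : ∀ᶠ i in l, z i ∈ K)
    (hx : ∀ w, Tendsto (fun i => ⟪w, z i⟫) l (𝓝 ⟪w, x⟫)) : x ∈ K := by
  rw [← K.orthogonal_orthogonal, Submodule.mem_orthogonal]
  intro w hw
  refine tendsto_nhds_unique (hx w) (tendsto_const_nhds.congr' ?_)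
  filter_upwards [hz] with i hi
  exact (inner_eq_zero_symm.mp (hw _ hi)).symm

theorem norm_le_of_forall_tendsto_inner {l : Filter ι} [l.NeBot] {f : ι → E} {η : E}
    {g : ι → ℝ} {c : ℝ} (hf : ∀ v, Tendsto (fun i => ⟪v, f i⟫) l (𝓝 ⟪v, η⟫))
    (hfg : ∀ᶠ i in l, ‖f i‖ ≤ g i) (hg : Tendsto g l (𝓝 c)) : ‖η‖ ≤ c := by
  have hc : 0 ≤ c := ge_of_tendsto hg (hfg.mono fun i hi => (norm_nonneg _).trans hi)
  have hsq : ‖η‖ ^ 2 ≤ ‖η‖ * c := by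
    have hre : Tendsto (fun i => RCLike.re ⟪η, f i⟫) l (𝓝 (‖η‖ ^ 2)) := by
      simpa only [Function.comp_def, inner_self_eq_norm_sq] using
        (RCLike.continuous_re.tendsto _).comp (hf η)
    refine le_of_tendsto_of_tendsto hre (hg.const_mul ‖η‖) ?_
    filter_upwards [hfg] with i hi
    calc RCLike.re ⟪η, f i⟫ ≤ ‖η‖ * ‖f i‖ := (RCLike.re_le_norm _).trans (norm_inner_le_norm _ _)
      _ ≤ ‖η‖ * g i := mul_le_mul_of_nonneg_left hi (norm_nonneg _)
  nlinarith [norm_nonneg η]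

end WeakLimits

namespace LinearPMap

variable {ι : Type*} {𝕜 : Type*} [RCLike 𝕜] {E F : Type*} [NormedAddCommGroup E]
  [InnerProductSpace 𝕜 E] [CompleteSpace E] [NormedAddCommGroup F] [InnerProductSpace 𝕜 F]
  [CompleteSpace F]

local notation "⟪" x ", " y "⟫" => inner 𝕜 x y

theorem IsClosed.mem_graph_of_forall_tendsto_inner {T : E →ₗ.[𝕜] F} (hT : T.IsClosed)
    {l : Filter ι} [l.NeBot] {x : ι → E} {y : ι → F} {x₀ : E} {y₀ : F}
    (hmem : ∀ᶠ i in l, (x i, y i) ∈ T.graph)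
    (hx : ∀ v, Tendsto (fun i => ⟪v, x i⟫) l (𝓝 ⟪v, x₀⟫))
    (hy : ∀ w, Tendsto (fun i => ⟪w, y i⟫) l (𝓝 ⟪w, y₀⟫)) : (x₀, y₀) ∈ T.graph := by
  let e := WithLp.prodContinuousLinearEquiv 2 𝕜 E F
  let K : Submodule 𝕜 (WithLp 2 (E × F)) := T.graph.comap (e : WithLp 2 (E × F) →ₗ[𝕜] E × F)
  have : CompleteSpace K := (hT.preimage e.continuous).completeSpace_coe
  have hK : e.symm (x₀, y₀) ∈ K := by
    refine K.mem_of_forall_tendsto_inner (l := l) (z := fun i => e.symm (x i, y i)) ?_ fun w => ?_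
    · simpa [K] using hmem
    · -- the inner product on `WithLp 2 (E × F)` is the sum of the componentwise ones, by `rfl`
      exact (hx (e w).1).add (hy (e w).2)
  simpa [K] using hK

theorem IsClosed.exists_mem_domain_norm_le_of_tendsto {T : E →ₗ.[𝕜] F} (hT : T.IsClosed)
    {l : Filter ι} [l.NeBot] {x : ι → E} {x₀ : E} {g : ι → ℝ} {c : ℝ}
    (hx : Tendsto x l (𝓝 x₀)) (hg : Tendsto g l (𝓝 c))
    (hTx : ∀ᶠ i in l, ∃ hi : x i ∈ T.domain, ‖T ⟨x i, hi⟩‖ ≤ g i) :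
    ∃ h₀ : x₀ ∈ T.domain, ‖T ⟨x₀, h₀⟩‖ ≤ c := by
  classical
  let y : ι → F := fun i => if hi : x i ∈ T.domain then T ⟨x i, hi⟩ else 0
  have hy : ∀ᶠ i in l, (x i, y i) ∈ T.graph ∧ ‖y i‖ ≤ g i := by
    filter_upwards [hTx] with i ⟨hi, hle⟩
    simpa only [y, dif_pos hi] using ⟨T.mem_graph ⟨x i, hi⟩, hle⟩
  -- a bounded net need not converge weakly, but it does along any ultrafilter refining `l`
  let U := Ultrafilter.of l
  have hU : (U : Filter ι) ≤ l := Ultrafilter.of_le l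
  have hyU : ∀ᶠ i in U, ‖y i‖ ≤ c + 1 := by
    filter_upwards [hU hy, hU (hg.eventually_lt_const (lt_add_one c))] with i hi hgi
    exact hi.2.trans hgi.le
  obtain ⟨y₀, hy₀⟩ := exists_forall_tendsto_inner_of_eventually_norm_le (𝕜 := 𝕜) hyU
  have hgraph : (x₀, y₀) ∈ T.graph :=
    hT.mem_graph_of_forall_tendsto_inner (hy.filter_mono hU |>.mono fun _ => And.left)
      (fun v => tendsto_const_nhds.inner (hx.mono_left hU)) hy₀
  have h₀ : x₀ ∈ T.domain := mem_domain_of_mem_graph hgraph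
  refine ⟨h₀, ?_⟩
  rw [← (image_iff h₀).mpr hgraph]
  exact norm_le_of_forall_tendsto_inner hy₀ (hy.filter_mono hU |>.mono fun _ => And.right)
    (hg.mono_left hU)

end LinearPMap

theorem regularity_of_eigenfunctions_general
    {H : Type*} [NormedAddCommGroup H] [InnerProductSpace ℂ H] [CompleteSpace H]
    (DC : Set H) (C : H → H)
    (Psqrt : H →ₗ.[ℂ] H) (hPclosed : Psqrt.IsClosed)
    (B : H →L[ℂ] H)
    -- D(C) ⊆ D(P^{1/2})
    (hDC : DC ⊆ (Psqrt.domain : Set H))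
    -- quadratic form inequality  C ≥ P − B  on DC
    (hform : ∀ φ (hφ : φ ∈ DC),
      ‖Psqrt ⟨φ, hDC hφ⟩‖ ^ 2 - (inner (𝕜 := ℂ) φ (B φ)).re ≤ (inner (𝕜 := ℂ) φ (C φ)).re)
    (ψ : H) (ψα : ℝ → H)
    (hmem : ∀ a ∈ Set.Ioi (0 : ℝ), ψα a ∈ DC)
    (hconv : Filter.Tendsto ψα (nhdsWithin 0 (Set.Ioi 0)) (nhds ψ))
    (hvan : Filter.Tendsto (fun a => (inner (𝕜 := ℂ) (ψα a) (C (ψα a))).re)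
      (nhdsWithin 0 (Set.Ioi 0)) (nhds 0)) :
    0 ≤ (inner (𝕜 := ℂ) ψ (B ψ)).re ∧
      ∃ hψ : ψ ∈ Psqrt.domain, ‖Psqrt ⟨ψ, hψ⟩‖ ^ 2 ≤ (inner (𝕜 := ℂ) ψ (B ψ)).re := by
  set b := (inner (𝕜 := ℂ) ψ (B ψ)).re
  set g : ℝ → ℝ := fun a =>
    (inner (𝕜 := ℂ) (ψα a) (C (ψα a))).re + (inner (𝕜 := ℂ) (ψα a) (B (ψα a))).re
  have hg : Tendsto g (𝓝[>] 0) (𝓝 b) := by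
    have hB : Continuous fun x : H => (inner (𝕜 := ℂ) x (B x)).re :=
      Complex.continuous_re.comp (continuous_id.inner B.continuous)
    simpa using hvan.add ((hB.tendsto ψ).comp hconv)
  have hPg : ∀ᶠ a in 𝓝[>] 0, ∃ h : ψα a ∈ Psqrt.domain, ‖Psqrt ⟨ψα a, h⟩‖ ^ 2 ≤ g a := by
    filter_upwards [self_mem_nhdsWithin] with a ha
    exact ⟨hDC (hmem a ha), by linarith [hform _ (hmem a ha)]⟩
  have hb : 0 ≤ b := ge_of_tendsto hg (hPg.mono fun _ ⟨_, h⟩ => (sq_nonneg _).trans h)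
  obtain ⟨hψ, hle⟩ := hPclosed.exists_mem_domain_norm_le_of_tendsto hconv hg.sqrt
    (hPg.mono fun _ ⟨h, hle⟩ => ⟨h, Real.le_sqrt_of_sq_le hle⟩)
  exact ⟨hb, hψ, (Real.le_sqrt (norm_nonneg _) hb).mp hle⟩

/-- **Regularity of eigenfunctions** (Theorem 3.5 of Fröhlich–Merkli, "Thermal Ionization").
`C` is a symmetric operator on a domain `DC` in a complex Hilbert space `H` satisfying, in the
sense of quadratic forms on `DC`, `C ≥ P - B`, where `P ≥ 0` is selfadjoint with (closed) square
root `Psqrt`, and `B` is bounded.  If `ψ_α ∈ DC`, `ψ_α → ψ` and `⟨ψ_α, C ψ_α⟩ → 0` as `α → 0⁺`,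
then `⟨ψ, Bψ⟩ ≥ 0`, `ψ` belongs to the domain of `P^{1/2}` and `‖P^{1/2}ψ‖² ≤ ⟨ψ, Bψ⟩`. -/
theorem regularity_of_eigenfunctions
    {H : Type*} [NormedAddCommGroup H] [InnerProductSpace ℂ H] [CompleteSpace H]
    (DC : Set H) (C : H → H)
    (Psqrt : H →ₗ.[ℂ] H) (hPclosed : Psqrt.IsClosed)
    (B : H →L[ℂ] H) (hBsa : IsSelfAdjoint B)
    -- symmetry of C on DC
    (hCsym : ∀ φ ∈ DC, ∀ χ ∈ DC, inner (𝕜 := ℂ) (C φ) χ = inner (𝕜 := ℂ) φ (C χ))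
    -- D(C) ⊆ D(P^{1/2})
    (hDC : DC ⊆ (Psqrt.domain : Set H))
    -- quadratic form inequality  C ≥ P − B  on DC
    (hform : ∀ φ (hφ : φ ∈ DC),
      ‖Psqrt ⟨φ, hDC hφ⟩‖ ^ 2 - (inner (𝕜 := ℂ) φ (B φ)).re ≤ (inner (𝕜 := ℂ) φ (C φ)).re)
    (ψ : H) (ψα : ℝ → H)
    (hmem : ∀ a ∈ Set.Ioi (0 : ℝ), ψα a ∈ DC)
    (hconv : Filter.Tendsto ψα (nhdsWithin 0 (Set.Ioi 0)) (nhds ψ))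
    (hvan : Filter.Tendsto (fun a => (inner (𝕜 := ℂ) (ψα a) (C (ψα a))).re)
      (nhdsWithin 0 (Set.Ioi 0)) (nhds 0)) :
    0 ≤ (inner (𝕜 := ℂ) ψ (B ψ)).re ∧
      ∃ hψ : ψ ∈ Psqrt.domain, ‖Psqrt ⟨ψ, hψ⟩‖ ^ 2 ≤ (inner (𝕜 := ℂ) ψ (B ψ)).re :=
  regularity_of_eigenfunctions_general DC C Psqrt hPclosed B hDC hform ψ ψα hmem hconv hvan
end

section
/- Let M be a bounded selfadjoint operator on a Hilbert space H and Π a finite-rank orthogonal projection with Π̄ = 1 − Π. Suppose Π̄MΠ̄ ≥ (1/2)Π̄ on Ran Π̄, and that for some δ > 0 and all m < 1/4 one has F_{Π,m}(M) ≥ δΠ on Ran Π, where F_{Π,m}(M) = Π(M − MΠ̄(Π̄MΠ̄ − mΠ̄)^{-1}Π̄M)Π. Then M ≥ min{1/4, δ} as an operator on H. -/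
/-- **Lower bound on `M` via the Feshbach map** (Section 4.4 of Fröhlich–Merkli).  Let `M`
be a bounded selfadjoint operator, `Π` a finite-rank orthogonal projection, `Π̄ = 1 − Π`.
Assume `Π̄MΠ̄ ≥ (1/2)Π̄` on `Ran Π̄` and that for some `δ > 0` and every `m < 1/4`
the Feshbach operator `F_{Π,m}(M) = Π(M − MΠ̄(Π̄MΠ̄ − mΠ̄)^{-1}Π̄M)Π` satisfies
`F_{Π,m}(M) ≥ δΠ` on `Ran Π`.  Then `M ≥ min{1/4, δ}` on `H`. -/
theorem feshbach_lower_bound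
    {H : Type*} [NormedAddCommGroup H] [InnerProductSpace ℂ H] [CompleteSpace H]
    (M Pi : H →L[ℂ] H)
    (hMsa : IsSelfAdjoint M)
    (hproj : Pi.comp Pi = Pi) (hPisa : IsSelfAdjoint Pi)
    (hfin : FiniteDimensional ℂ (LinearMap.range (Pi : H →ₗ[ℂ] H)))
    (hbar : ∀ ψ : H, (1/2 : ℝ) * ‖(1 - Pi) ψ‖ ^ 2 ≤
      (inner (𝕜 := ℂ) ((1 - Pi) ψ) (M ((1 - Pi) ψ))).re)
    (δ : ℝ) (hδ : 0 < δ)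
    -- the resolvent `(Π̄MΠ̄ − mΠ̄)^{-1}` on `Ran Π̄`, for each `m < 1/4`:
    (Res : ℝ → (H →L[ℂ] H))
    (hRes₁ : ∀ m < (1/4 : ℝ), ((1 - Pi) : H →L[ℂ] H).comp ((Res m).comp (1 - Pi)) = Res m)
    (hRes₂ : ∀ m < (1/4 : ℝ), (Res m).comp
      ((((1:H →L[ℂ] H) - Pi).comp (M.comp (1 - Pi))) - (m : ℂ) • (1 - Pi)) = 1 - Pi)
    (hRes₃ : ∀ m < (1/4 : ℝ),
      (((((1:H →L[ℂ] H) - Pi).comp (M.comp (1 - Pi))) - (m : ℂ) • (1 - Pi)).comp (Res m))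
        = 1 - Pi)
    -- Feshbach lower bound `F_{Π,m}(M) ≥ δΠ` on `Ran Π`:
    (hF : ∀ m < (1/4 : ℝ), ∀ ψ : H,
      δ * ‖Pi ψ‖ ^ 2 ≤
        (inner (𝕜 := ℂ) (Pi ψ)
          ((M - M.comp (((1:H →L[ℂ] H) - Pi).comp ((Res m).comp (((1:H →L[ℂ] H) - Pi).comp M))))
            (Pi ψ))).re) :
    ∀ ψ : H, min (1/4 : ℝ) δ * ‖ψ‖ ^ 2 ≤ (inner (𝕜 := ℂ) ψ (M ψ)).re := by
  intro ψ
  have hc0 : (0:ℝ) < min (1/4 : ℝ) δ := lt_min (by norm_num) hδ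
  obtain ⟨Q, hQdef⟩ : ∃ Q' : H →L[ℂ] H, Q' = 1 - Pi := ⟨_, rfl⟩
  have hQsa : IsSelfAdjoint Q := by
    rw [hQdef]; exact (IsSelfAdjoint.one (H →L[ℂ] H)).sub hPisa
  rw [← hQdef] at hbar hRes₁ hRes₃ hF
  -- pointwise projector identities
  have hPP : ∀ x : H, Pi (Pi x) = Pi x := fun x => by
    simpa using ContinuousLinearMap.ext_iff.mp hproj x
  have hQap : ∀ x : H, Q x = x - Pi x := fun x => by
    rw [hQdef]; simp
  have hQQ : ∀ x : H, Q (Q x) = Q x := fun x => by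
    simp [hQap, hPP, map_sub]
  have hPQ : ∀ x : H, Pi (Q x) = 0 := fun x => by
    rw [hQap, map_sub, hPP, sub_self]
  -- symmetric swaps
  have hMsw : ∀ x y : H, (inner (𝕜 := ℂ) (M x) y) = inner (𝕜 := ℂ) x (M y) :=
    fun x y => hMsa.isSymmetric x y
  have hQsw : ∀ x y : H, (inner (𝕜 := ℂ) (Q x) y) = inner (𝕜 := ℂ) x (Q y) :=
    fun x y => hQsa.isSymmetric x y
  have hPsw : ∀ x y : H, (inner (𝕜 := ℂ) (Pi x) y) = inner (𝕜 := ℂ) x (Pi y) :=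
    fun x y => hPisa.isSymmetric x y
  have hresw : ∀ x y : H, (inner (𝕜 := ℂ) x y).re = (inner (𝕜 := ℂ) y x).re := fun x y => by
    simpa using inner_re_symm (𝕜 := ℂ) x y
  have key : ∀ m < min (1/4 : ℝ) δ,
      m * ‖ψ‖ ^ 2 ≤ (inner (𝕜 := ℂ) ψ (M ψ)).re := by
    intro m hm
    have hm14 : m < 1/4 := lt_of_lt_of_le hm (min_le_left _ _)
    have hmδ : m < δ := lt_of_lt_of_le hm (min_le_right _ _)
    have hR1 := hRes₁ m hm14
    have hR3 := hRes₃ m hm14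
    have hFm := hF m hm14 ψ
    obtain ⟨R, hRdef⟩ : ∃ R' : H →L[ℂ] H, R' = Res m := ⟨_, rfl⟩
    rw [← hRdef] at hR1 hR3 hFm
    obtain ⟨p, hp⟩ : ∃ p, p = Pi ψ := ⟨_, rfl⟩
    obtain ⟨q, hq⟩ : ∃ q, q = Q ψ := ⟨_, rfl⟩
    have hψ : ψ = p + q := by rw [hp, hq, hQap]; abel
    have hR1' : ∀ x : H, Q (R (Q x)) = R x := fun x => by
      simpa using ContinuousLinearMap.ext_iff.mp hR1 x
    have hR3' : ∀ x : H, Q (M (Q (R x))) - (m:ℂ) • (Q (R x)) = Q x := fun x => by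
      simpa using ContinuousLinearMap.ext_iff.mp hR3 x
    have hRQ : ∀ x : H, R (Q x) = R x := fun x => by
      have h := hR1' (Q x)
      rw [hQQ] at h
      rw [← h]
      exact hR1' x
    obtain ⟨u, hu⟩ : ∃ u, u = R (Q (M p)) := ⟨_, rfl⟩
    have hQu : Q u = u := by rw [hu, hR1' (M p), hRQ (M p)]
    have hQq : Q q = q := by rw [hq, hQQ]
    have hBu : Q (M u) = Q (M p) + (m:ℂ) • u := by
      have h := hR3' (Q (M p))
      rw [← hu, hQu, hQQ] at h
      rw [← h]; abel
    -- inner product identities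
    have c3 : (inner (𝕜 := ℂ) q (M u)) = inner (𝕜 := ℂ) q (M p) + (m:ℂ) * inner (𝕜 := ℂ) q u := by
      calc (inner (𝕜 := ℂ) q (M u)) = inner (𝕜 := ℂ) (Q q) (M u) := by rw [hQq]
        _ = inner (𝕜 := ℂ) q (Q (M u)) := hQsw _ _
        _ = inner (𝕜 := ℂ) q (Q (M p)) + (m:ℂ) * inner (𝕜 := ℂ) q u := by
            rw [hBu, inner_add_right, inner_smul_right]
        _ = inner (𝕜 := ℂ) (Q q) (M p) + (m:ℂ) * inner (𝕜 := ℂ) q u := by rw [hQsw]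
        _ = _ := by rw [hQq]
    have c4 : (inner (𝕜 := ℂ) u (M q)) = inner (𝕜 := ℂ) (M p) q + (m:ℂ) * inner (𝕜 := ℂ) u q := by
      calc (inner (𝕜 := ℂ) u (M q)) = inner (𝕜 := ℂ) (M u) q := (hMsw _ _).symm
        _ = inner (𝕜 := ℂ) (M u) (Q q) := by rw [hQq]
        _ = inner (𝕜 := ℂ) (Q (M u)) q := by rw [hQsw]
        _ = inner (𝕜 := ℂ) (Q (M p)) q + inner (𝕜 := ℂ) ((m:ℂ) • u) q := by
            rw [hBu, inner_add_left]
        _ = inner (𝕜 := ℂ) (M p) (Q q) + (m:ℂ) * inner (𝕜 := ℂ) u q := by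
            rw [hQsw, inner_smul_left]
            norm_num
        _ = _ := by rw [hQq]
    have c5 : (inner (𝕜 := ℂ) u (M u)) = inner (𝕜 := ℂ) u (M p) + (m:ℂ) * inner (𝕜 := ℂ) u u := by
      calc (inner (𝕜 := ℂ) u (M u)) = inner (𝕜 := ℂ) (Q u) (M u) := by rw [hQu]
        _ = inner (𝕜 := ℂ) u (Q (M u)) := hQsw _ _
        _ = inner (𝕜 := ℂ) u (Q (M p)) + (m:ℂ) * inner (𝕜 := ℂ) u u := by
            rw [hBu, inner_add_right, inner_smul_right]
        _ = inner (𝕜 := ℂ) (Q u) (M p) + (m:ℂ) * inner (𝕜 := ℂ) u u := by rw [hQsw]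
        _ = _ := by rw [hQu]
    -- Feshbach bound at ψ
    simp only [ContinuousLinearMap.sub_apply, ContinuousLinearMap.comp_apply] at hFm
    rw [← hp, ← hu, hQu] at hFm
    -- hFm : δ * ‖p‖^2 ≤ (inner p (M p - M u)).re
    have hFm' : δ * ‖p‖ ^ 2 ≤ (inner (𝕜 := ℂ) p (M p)).re - (inner (𝕜 := ℂ) u (M p)).re := by
      have e2 : (inner (𝕜 := ℂ) p (M u)).re = (inner (𝕜 := ℂ) u (M p)).re := by
        rw [← hMsw p u]
        exact hresw _ _
      rw [inner_sub_right] at hFm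
      simpa [Complex.sub_re, e2] using hFm
    -- lower bound on the Q-block
    obtain ⟨v, hv⟩ : ∃ v, v = q + u := ⟨_, rfl⟩
    have hQv : Q v = v := by rw [hv, map_add, hQq, hQu]
    have hbarv := hbar v
    rw [hQv] at hbarv
    -- expand ⟪v, M v⟫
    have cv : (inner (𝕜 := ℂ) v (M v)) =
        inner (𝕜 := ℂ) q (M q) + inner (𝕜 := ℂ) q (M p) + inner (𝕜 := ℂ) (M p) q
          + inner (𝕜 := ℂ) u (M p)
          + (m:ℂ) * (inner (𝕜 := ℂ) q u + inner (𝕜 := ℂ) u q + inner (𝕜 := ℂ) u u) := by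
      rw [hv, map_add, inner_add_left, inner_add_right, inner_add_right, c3, c4, c5]
      ring
    -- expand ⟪ψ, M ψ⟫
    have cψ : (inner (𝕜 := ℂ) ψ (M ψ)) =
        inner (𝕜 := ℂ) p (M p) + inner (𝕜 := ℂ) (M p) q + inner (𝕜 := ℂ) q (M p)
          + inner (𝕜 := ℂ) q (M q) := by
      rw [hψ, map_add, inner_add_left, inner_add_right, inner_add_right, ← hMsw p q]
      ring
    -- norms
    have hpq : (inner (𝕜 := ℂ) p q) = 0 := by
      rw [hp, hq, hPsw, hPQ, inner_zero_right]
    have nψ : ‖ψ‖ ^ 2 = ‖p‖ ^ 2 + ‖q‖ ^ 2 := by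
      rw [hψ, @norm_add_sq ℂ, hpq]
      simp
    have nv : ‖v‖ ^ 2 = ‖q‖ ^ 2 + 2 * (inner (𝕜 := ℂ) q u).re + ‖u‖ ^ 2 := by
      rw [hv, @norm_add_sq ℂ]
      norm_num
    -- real parts
    have requ : (inner (𝕜 := ℂ) u q).re = (inner (𝕜 := ℂ) q u).re := hresw _ _
    have reqp : (inner (𝕜 := ℂ) q (M p)).re = (inner (𝕜 := ℂ) (M p) q).re := hresw _ _
    have reuu : (inner (𝕜 := ℂ) u u).re = ‖u‖ ^ 2 := by
      simpa using inner_self_eq_norm_sq (𝕜 := ℂ) (E := H) u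
    -- put everything together over ℝ
    have rv : (inner (𝕜 := ℂ) v (M v)).re =
        (inner (𝕜 := ℂ) q (M q)).re + 2 * (inner (𝕜 := ℂ) (M p) q).re
          + (inner (𝕜 := ℂ) u (M p)).re
          + m * (2 * (inner (𝕜 := ℂ) q u).re + ‖u‖ ^ 2) := by
      rw [cv]
      simp only [Complex.add_re, Complex.mul_re, Complex.ofReal_re, Complex.ofReal_im,
        reqp, requ, reuu]
      ring
    have rψ : (inner (𝕜 := ℂ) ψ (M ψ)).re =
        (inner (𝕜 := ℂ) p (M p)).re + 2 * (inner (𝕜 := ℂ) (M p) q).re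
          + (inner (𝕜 := ℂ) q (M q)).re := by
      rw [cψ]
      simp only [Complex.add_re, reqp]
      ring
    have hv0 : (0:ℝ) ≤ ‖v‖ ^ 2 := by positivity
    have hp0 : (0:ℝ) ≤ ‖p‖ ^ 2 := by positivity
    have e6 : m * ‖p‖ ^ 2 ≤ δ * ‖p‖ ^ 2 := mul_le_mul_of_nonneg_right hmδ.le hp0
    have e7 : m * ‖v‖ ^ 2 ≤ (1/2) * ‖v‖ ^ 2 :=
      mul_le_mul_of_nonneg_right (by linarith) hv0
    have nψ' : m * ‖ψ‖ ^ 2 = m * ‖p‖ ^ 2 + m * ‖q‖ ^ 2 := by rw [nψ]; ring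
    have nv' : m * ‖v‖ ^ 2 =
        m * ‖q‖ ^ 2 + m * (2 * (inner (𝕜 := ℂ) q u).re + ‖u‖ ^ 2) := by rw [nv]; ring
    linarith [hFm', hbarv, rv, rψ, nψ', nv', e6, e7]
  -- limiting argument
  by_contra hcon
  push_neg at hcon
  have hn0 : 0 < ‖ψ‖ ^ 2 := by
    rcases lt_or_eq_of_le (by positivity : (0:ℝ) ≤ ‖ψ‖ ^ 2) with h | h
    · exact h
    · exfalso
      have h0 := key 0 hc0
      rw [← h] at hcon
      simp at hcon h0
      linarith
  have hdiv : (inner (𝕜 := ℂ) ψ (M ψ)).re / ‖ψ‖ ^ 2 < min (1/4 : ℝ) δ :=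
    (div_lt_iff₀ hn0).mpr (by linarith)
  obtain ⟨m, hm1, hm2⟩ := exists_between hdiv
  have h2 := key m hm2
  have h3 : (inner (𝕜 := ℂ) ψ (M ψ)).re < m * ‖ψ‖ ^ 2 := (div_lt_iff₀ hn0).mp hm1
  linarith
end

section
/- Let Y ≥ 1 be a selfadjoint operator on a Hilbert space H and X a selfadjoint operator whose unitary group e^{itX} leaves D(Y) invariant with ‖Y e^{itX} ψ‖ ≤ e^{k|t|} ‖Y ψ‖ for all ψ ∈ D(Y) and some k ≥ 0. If χ : ℝ → ℂ has Fourier transform χ̂ ∈ L¹(ℝ) supported in [−R, R], then the operator χ(X) = ∫_ℝ χ̂(s) e^{isX} ds leaves D(Y) invariant, and ‖Y χ(X) ψ‖ ≤ e^{kR} ‖χ̂‖_{L¹} ‖Y ψ‖ for all ψ ∈ D(Y). -/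
/-!
Replace the nodes `s` of `∫ χ̂(s) U(s)ψ ds` by `⌊(n+1)s⌋/(n+1)`. The resulting integrands take
countably many values in `D(Y)` and are integrable in the graph norm, so the closedness of `Y`
puts the integrals `Φₙ` in `D(Y)` with `‖Y Φₙ‖ ≤ e^{k(R + 1/(n+1))} ‖χ̂‖₁ ‖Yψ‖`, while `Φₙ → χ(X)ψ`
by dominated convergence. As `s ↦ Y U(s)ψ` need not be measurable, the limit is taken weakly: a
bounded sequence in the graph of `Y`, a closed subspace of the Hilbert space `H ⊕ H`, has a weak
cluster point in it, and the norm is weakly lower semicontinuous.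
-/

open MeasureTheory Filter Topology
open scoped InnerProductSpace

section WeakLimits

variable {𝕜 E ι : Type*} [RCLike 𝕜] [NormedAddCommGroup E] [InnerProductSpace 𝕜 E]

theorem exists_tendsto_inner_of_isBoundedUnder [CompleteSpace E] (𝒰 : Ultrafilter ι)
    {v : ι → E} (hv : IsBoundedUnder (· ≤ ·) 𝒰 fun i => ‖v i‖) :
    ∃ w : E, ∀ y, Tendsto (fun i => ⟪v i, y⟫_𝕜) 𝒰 (𝓝 ⟪w, y⟫_𝕜) := by
  obtain ⟨C, hC⟩ := hv
  have hC : ∀ᶠ i in 𝒰, ‖v i‖ ≤ C := hC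
  have hinner : ∀ y, ∀ᶠ i in 𝒰, ‖⟪v i, y⟫_𝕜‖ ≤ C * ‖y‖ := fun y =>
    hC.mono fun i hi => (norm_inner_le_norm _ _).trans (by gcongr)
  have hlim : ∀ y, ∃ a, Tendsto (fun i => ⟪v i, y⟫_𝕜) 𝒰 (𝓝 a) := fun y => by
    obtain ⟨a, -, ha⟩ :=
      (ProperSpace.isCompact_closedBall (0 : 𝕜) (C * ‖y‖)).ultrafilter_le_nhds'
        (𝒰.map fun i => ⟪v i, y⟫_𝕜) ((hinner y).mono fun i hi => by simpa using hi)
    exact ⟨a, ha⟩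
  choose ℓ hℓ using hlim
  let L : E →L[𝕜] 𝕜 := LinearMap.mkContinuous
    { toFun := ℓ
      map_add' := fun y z => tendsto_nhds_unique (by simpa [inner_add_right] using hℓ (y + z))
        ((hℓ y).add (hℓ z))
      map_smul' := fun c y => tendsto_nhds_unique (by simpa [inner_smul_right] using hℓ (c • y))
        ((hℓ y).const_mul c) }
    C fun y => le_of_tendsto (hℓ y).norm (hinner y)
  refine ⟨(InnerProductSpace.toDual 𝕜 E).symm L, fun y => ?_⟩
  rw [InnerProductSpace.toDual_symm_apply]
  exact hℓ y

variable {l : Filter ι} {v : ι → E} {w : E}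

theorem norm_le_of_tendsto_inner [l.NeBot] {C : ι → ℝ} {c : ℝ}
    (hw : ∀ y, Tendsto (fun i => ⟪v i, y⟫_𝕜) l (𝓝 ⟪w, y⟫_𝕜))
    (hC : Tendsto C l (𝓝 c)) (hv : ∀ᶠ i in l, ‖v i‖ ≤ C i) : ‖w‖ ≤ c := by
  have hc : 0 ≤ c := ge_of_tendsto hC (hv.mono fun i hi => (norm_nonneg _).trans hi)
  have hsq : ‖w‖ * ‖w‖ ≤ c * ‖w‖ := by
    rw [← inner_self_eq_norm_mul_norm (𝕜 := 𝕜), inner_self_re_eq_norm]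
    refine le_of_tendsto_of_tendsto (hw w).norm (hC.mul_const ‖w‖) (hv.mono fun i hi => ?_)
    exact (norm_inner_le_norm _ _).trans (mul_le_mul_of_nonneg_right hi (norm_nonneg w))
  nlinarith [norm_nonneg w]

theorem eq_of_tendsto_of_tendsto_inner [l.NeBot] {x : E} (hx : Tendsto v l (𝓝 x))
    (hw : ∀ y, Tendsto (fun i => ⟪v i, y⟫_𝕜) l (𝓝 ⟪w, y⟫_𝕜)) : w = x :=
  ext_inner_right 𝕜 fun y => tendsto_nhds_unique (hw y) (hx.inner tendsto_const_nhds)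

theorem Submodule.mem_of_tendsto_inner [l.NeBot] [CompleteSpace E] {K : Submodule 𝕜 E}
    (hK : IsClosed (K : Set E)) (hv : ∀ᶠ i in l, v i ∈ K)
    (hw : ∀ y, Tendsto (fun i => ⟪v i, y⟫_𝕜) l (𝓝 ⟪w, y⟫_𝕜)) : w ∈ K := by
  have : CompleteSpace K := hK.completeSpace_coe
  rw [← K.orthogonal_orthogonal, Submodule.mem_orthogonal']
  refine fun u hu => tendsto_nhds_unique (hw u) (tendsto_const_nhds.congr' ?_)
  exact hv.mono fun i hi => (K.inner_right_of_mem_orthogonal hi hu).symm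

variable {F : Type*} [NormedAddCommGroup F] [InnerProductSpace 𝕜 F]
  {v : ι → WithLp 2 (E × F)} {w : WithLp 2 (E × F)}

theorem WithLp.tendsto_inner_fst
    (hw : ∀ y, Tendsto (fun i => ⟪v i, y⟫_𝕜) l (𝓝 ⟪w, y⟫_𝕜)) (y : E) :
    Tendsto (fun i => ⟪(v i).fst, y⟫_𝕜) l (𝓝 ⟪w.fst, y⟫_𝕜) := by
  simpa using hw (WithLp.toLp 2 (y, 0))

theorem WithLp.tendsto_inner_snd
    (hw : ∀ y, Tendsto (fun i => ⟪v i, y⟫_𝕜) l (𝓝 ⟪w, y⟫_𝕜)) (y : F) :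
    Tendsto (fun i => ⟪(v i).snd, y⟫_𝕜) l (𝓝 ⟪w.snd, y⟫_𝕜) := by
  simpa using hw (WithLp.toLp 2 (0, y))

end WeakLimits

theorem Submodule.integral_mem_of_isClosed {α E : Type*} [MeasurableSpace α] {μ : Measure α}
    [NormedAddCommGroup E] [NormedSpace ℝ E] [CompleteSpace E] {K : Submodule ℝ E}
    (hK : IsClosed (K : Set E)) {g : α → E} (hg : ∀ a, g a ∈ K) : ∫ a, g a ∂μ ∈ K := by
  by_cases hgi : Integrable g μ
  · -- `E ⧸ K` is a normed space, as `K` is closed, and the integral commutes with `K.mkQL`.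
    rw [← Submodule.Quotient.mk_eq_zero]
    have hzero : ∀ a, K.mkQL (g a) = 0 := fun a => (Submodule.Quotient.mk_eq_zero K).2 (hg a)
    change K.mkQL _ = 0
    rw [← K.mkQL.integral_comp_comm hgi]
    simp only [hzero, integral_zero]
  · simp [integral_undef hgi]

theorem dist_floor_mul_div_lt {c : ℝ} (hc : 0 < c) (s : ℝ) : dist (⌊c * s⌋ / c) s < 1 / c := by
  have hle : (⌊c * s⌋ : ℝ) / c ≤ s := by
    rw [div_le_iff₀ hc, mul_comm]
    exact Int.floor_le _
  have hlt : s - 1 / c < ⌊c * s⌋ / c := by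
    rw [lt_div_iff₀ hc, sub_mul, one_div_mul_cancel hc.ne', mul_comm]
    linarith [Int.lt_floor_add_one (c * s)]
  rw [Real.dist_eq, abs_sub_lt_iff]
  constructor <;> linarith [one_div_pos.2 hc]

section StepApproximation

variable {𝕜 G α ι : Type*} [RCLike 𝕜] [NormedAddCommGroup G] [NormedSpace 𝕜 G]

theorem norm_smul_le_of_ne_zero_imp {c : 𝕜} {x : G} {M : ℝ} (h : c ≠ 0 → ‖x‖ ≤ M) :
    ‖c • x‖ ≤ ‖c‖ * M := by
  rcases eq_or_ne c 0 with rfl | hc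
  · simp
  · rw [norm_smul]
    exact mul_le_mul_of_nonneg_left (h hc) (norm_nonneg c)

theorem MeasureTheory.Integrable.smul_comp_of_countable [MeasurableSpace α] {μ : Measure α}
    [Countable ι] [MeasurableSpace ι] [MeasurableSingletonClass ι] {χ : α → 𝕜}
    (hχ : Integrable χ μ) {j : α → ι} (hj : Measurable j) {v : ι → G} {M : ℝ}
    (hv : ∀ a, χ a ≠ 0 → ‖v (j a)‖ ≤ M) : Integrable (fun a => χ a • v (j a)) μ :=
  (hχ.norm.mul_const M).mono'
    (hχ.aestronglyMeasurable.smul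
      (StronglyMeasurable.of_discrete.comp_measurable hj).aestronglyMeasurable)
    (ae_of_all _ fun a => norm_smul_le_of_ne_zero_imp (hv a))

theorem tendsto_integral_smul_comp_floor_mul_div [NormedSpace ℝ G] {μ : Measure ℝ}
    {χ : ℝ → 𝕜} (hχ : Integrable χ μ) {g : ℝ → G} (hg : Continuous g) {M : ℝ}
    (hM : ∀ t, ‖g t‖ ≤ M) :
    Tendsto (fun n : ℕ => ∫ s, χ s • g (⌊(n + 1 : ℝ) * s⌋ / (n + 1)) ∂μ) atTop
      (𝓝 (∫ s, χ s • g s ∂μ)) := by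
  have hnode (s : ℝ) : Tendsto (fun n : ℕ => (⌊(n + 1 : ℝ) * s⌋ : ℝ) / (n + 1)) atTop (𝓝 s) :=
    tendsto_iff_dist_tendsto_zero.2 <| squeeze_zero (fun _ => dist_nonneg)
      (fun n => (dist_floor_mul_div_lt (by positivity) s).le)
      tendsto_one_div_add_atTop_nhds_zero_nat
  refine tendsto_integral_of_dominated_convergence (fun s => ‖χ s‖ * M) (fun n => ?_)
    (hχ.norm.mul_const M)
    (fun n => ae_of_all _ fun s => norm_smul_le_of_ne_zero_imp fun _ => hM _)
    (ae_of_all _ fun s => tendsto_const_nhds.smul ((hg.tendsto s).comp (hnode s)))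
  exact hχ.aestronglyMeasurable.smul (hg.comp_aestronglyMeasurable
    ((measurable_from_top.comp (Int.measurable_floor.comp (measurable_const_mul _))).div_const
      _).aestronglyMeasurable)

end StepApproximation

namespace LinearPMap

section Hilbert

variable {𝕜 E F ι : Type*} [RCLike 𝕜] [NormedAddCommGroup E] [InnerProductSpace 𝕜 E]
  [CompleteSpace E] [NormedAddCommGroup F] [InnerProductSpace 𝕜 F] [CompleteSpace F]
  {f : E →ₗ.[𝕜] F}

theorem IsClosed.exists_mem_domain_norm_le_of_tendsto_s13 (hf : f.IsClosed) {l : Filter ι}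
    [l.NeBot] {x : ι → f.domain} {x₀ : E} {C : ι → ℝ} {c : ℝ}
    (hx : Tendsto (fun i => (x i : E)) l (𝓝 x₀)) (hC : Tendsto C l (𝓝 c))
    (hfx : ∀ i, ‖f (x i)‖ ≤ C i) : ∃ h : x₀ ∈ f.domain, ‖f ⟨x₀, h⟩‖ ≤ c := by
  let 𝒰 := Ultrafilter.of l
  have h𝒰 : (𝒰 : Filter ι) ≤ l := Ultrafilter.of_le l
  let G : Submodule 𝕜 (WithLp 2 (E × F)) :=
    f.graph.comap (WithLp.linearEquiv 2 𝕜 (E × F)).toLinearMap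
  have hG : _root_.IsClosed (G : Set (WithLp 2 (E × F))) :=
    hf.preimage (WithLp.prodContinuousLinearEquiv 2 𝕜 E F).continuous
  let v : ι → WithLp 2 (E × F) := fun i => WithLp.toLp 2 ((x i : E), f (x i))
  have hv : IsBoundedUnder (· ≤ ·) 𝒰 fun i => ‖v i‖ := by
    refine (((hx.norm.add hC).mono_left h𝒰).isBoundedUnder_le).mono_le
      (Eventually.of_forall fun i => ?_)
    have hsq : ‖v i‖ ^ 2 = ‖(x i : E)‖ ^ 2 + ‖f (x i)‖ ^ 2 :=
      WithLp.prod_norm_sq_eq_of_L2 (v i)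
    nlinarith [hfx i, norm_nonneg (v i), norm_nonneg (x i : E), norm_nonneg (f (x i))]
  obtain ⟨w, hw⟩ := exists_tendsto_inner_of_isBoundedUnder (𝕜 := 𝕜) 𝒰 hv
  have hwG : w ∈ G :=
    G.mem_of_tendsto_inner hG (Eventually.of_forall fun i => f.mem_graph (x i)) hw
  have hw₁ : w.fst = x₀ :=
    eq_of_tendsto_of_tendsto_inner (hx.mono_left h𝒰) (WithLp.tendsto_inner_fst hw)
  have hw₂ : ‖w.snd‖ ≤ c :=
    norm_le_of_tendsto_inner (WithLp.tendsto_inner_snd hw) (hC.mono_left h𝒰)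
      (Eventually.of_forall hfx)
  obtain ⟨y, hy₁, hy₂⟩ := f.mem_graph_iff.1 hwG
  obtain ⟨y, hy⟩ := y
  obtain rfl : y = x₀ := hy₁.trans hw₁
  exact ⟨hy, (congrArg norm hy₂).trans_le hw₂⟩

end Hilbert

section Banach

variable {𝕜 E F α ι : Type*} [RCLike 𝕜] [MeasurableSpace α] {μ : Measure α}
  [NormedAddCommGroup E] [NormedSpace 𝕜 E] [NormedSpace ℝ E] [IsScalarTower ℝ 𝕜 E]
  [CompleteSpace E] [NormedAddCommGroup F] [NormedSpace 𝕜 F] [NormedSpace ℝ F]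
  [IsScalarTower ℝ 𝕜 F] [CompleteSpace F] {f : E →ₗ.[𝕜] F}

theorem IsClosed.integral_mem_domain (hf : f.IsClosed) {g : α → f.domain}
    (hg : Integrable (fun a => (g a : E)) μ) (hfg : Integrable (fun a => f (g a)) μ) :
    ∃ h : ∫ a, (g a : E) ∂μ ∈ f.domain, f ⟨_, h⟩ = ∫ a, f (g a) ∂μ := by
  have hmem := Submodule.integral_mem_of_isClosed (μ := μ) (K := f.graph.restrictScalars ℝ)
    hf (g := fun a => ((g a : E), f (g a))) fun a => f.mem_graph (g a)
  rw [integral_pair hg hfg] at hmem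
  obtain ⟨⟨y, hy⟩, hy₁, hy₂⟩ := f.mem_graph_iff.1 hmem
  obtain rfl : y = ∫ a, (g a : E) ∂μ := hy₁
  exact ⟨hy, hy₂⟩

theorem IsClosed.exists_integral_smul_mem_domain [Countable ι] [MeasurableSpace ι]
    [MeasurableSingletonClass ι] (hf : f.IsClosed) {χ : α → 𝕜} (hχ : Integrable χ μ)
    {j : α → ι} (hj : Measurable j) (u : ι → f.domain) {A B : ℝ}
    (hA : ∀ a, χ a ≠ 0 → ‖(u (j a) : E)‖ ≤ A) (hB : ∀ a, χ a ≠ 0 → ‖f (u (j a))‖ ≤ B) :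
    ∃ h : ∫ a, χ a • (u (j a) : E) ∂μ ∈ f.domain,
      ‖f ⟨_, h⟩‖ ≤ (∫ a, ‖χ a‖ ∂μ) * B := by
  obtain ⟨h, hfh⟩ := hf.integral_mem_domain (g := fun a => χ a • u (j a))
    (hχ.smul_comp_of_countable (v := fun i => (u i : E)) hj hA)
    (by simpa only [map_smul] using hχ.smul_comp_of_countable (v := fun i => f (u i)) hj hB)
  refine ⟨h, (congrArg norm hfh).trans_le ?_⟩
  rw [← integral_mul_const]
  refine norm_integral_le_of_norm_le (hχ.norm.mul_const B) (ae_of_all _ fun a => ?_)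
  rw [map_smul]
  exact norm_smul_le_of_ne_zero_imp (hB a)

end Banach

end LinearPMap

theorem chiX_leaves_domain_invariant_general
    {H : Type*} [NormedAddCommGroup H] [InnerProductSpace ℂ H] [CompleteSpace H]
    (Y : H →ₗ.[ℂ] H) (hYclosed : Y.IsClosed)
    (U : ℝ → (H →L[ℂ] H))
    (hUiso : ∀ t (ψ : H), ‖U t ψ‖ = ‖ψ‖)
    (hUcont : ∀ ψ : H, Continuous fun t => U t ψ)
    (k : ℝ) (hk : 0 ≤ k)
    (hinv : ∀ (t : ℝ) (ψ : Y.domain), U t (ψ : H) ∈ Y.domain)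
    (hbound : ∀ (t : ℝ) (ψ : Y.domain),
      ‖Y ⟨U t (ψ : H), hinv t ψ⟩‖ ≤ Real.exp (k * |t|) * ‖Y ψ‖)
    (χhat : ℝ → ℂ) (hχint : Integrable χhat)
    (R : ℝ)
    (hsupp : ∀ s, χhat s ≠ 0 → s ∈ Set.Icc (-R) R) :
    ∀ ψ : Y.domain,
      ∃ hmem : (∫ s, χhat s • U s (ψ : H)) ∈ Y.domain,
        ‖Y ⟨∫ s, χhat s • U s (ψ : H), hmem⟩‖ ≤
          Real.exp (k * R) * (∫ s, ‖χhat s‖) * ‖Y ψ‖ := by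
  intro ψ
  let C (n : ℕ) : ℝ := Real.exp (k * (R + 1 / (n + 1))) * (∫ s, ‖χhat s‖) * ‖Y ψ‖
  have hnode (n : ℕ) (s : ℝ) (hs : χhat s ≠ 0) :
      |(⌊(n + 1 : ℝ) * s⌋ : ℝ) / (n + 1)| ≤ R + 1 / (n + 1) := by
    have hdist := (dist_floor_mul_div_lt (by positivity : (0 : ℝ) < n + 1) s).le
    have hsR := abs_le.2 (hsupp s hs)
    rw [Real.dist_eq] at hdist
    linarith [abs_sub_abs_le_abs_sub ((⌊(n + 1 : ℝ) * s⌋ : ℝ) / (n + 1)) s]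
  have happrox (n : ℕ) :
      ∃ h : (∫ s, χhat s • U (⌊(n + 1 : ℝ) * s⌋ / (n + 1)) (ψ : H)) ∈ Y.domain,
        ‖Y ⟨_, h⟩‖ ≤ C n := by
    obtain ⟨h, hle⟩ := hYclosed.exists_integral_smul_mem_domain hχint
      (j := fun s => ⌊(n + 1 : ℝ) * s⌋) (Int.measurable_floor.comp (measurable_const_mul _))
      (B := Real.exp (k * (R + 1 / (n + 1))) * ‖Y ψ‖)
      (fun m : ℤ => ⟨U (m / (n + 1)) ψ, hinv _ ψ⟩) (fun s _ => (hUiso _ _).le)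
      (fun s hs => (hbound _ ψ).trans (by gcongr; exact hnode n s hs))
    exact ⟨h, hle.trans_eq (by ring)⟩
  choose hmem hYle using happrox
  refine hYclosed.exists_mem_domain_norm_le_of_tendsto_s13 (x := fun n => ⟨_, hmem n⟩)
    (tendsto_integral_smul_comp_floor_mul_div hχint (hUcont ψ) fun t => (hUiso t ψ).le) ?_ hYle
  have hradius : Tendsto (fun n : ℕ => R + 1 / ((n : ℝ) + 1)) atTop (𝓝 R) := by
    simpa using tendsto_one_div_add_atTop_nhds_zero_nat.const_add R
  exact (((Real.continuous_exp.tendsto _).comp (hradius.const_mul k)).mul_const _).mul_const _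

/-- **Invariance of `D(Y)` under `χ(X)` with compactly supported Fourier transform**
(Proposition 5.3 of Fröhlich–Merkli).  Let `Y ≥ 1` be a selfadjoint (closed) operator and
`U t = e^{itX}` a unitary group leaving `D(Y)` invariant with
`‖Y U t ψ‖ ≤ e^{k|t|}‖Yψ‖`.  If `χ̂ ∈ L¹(ℝ)` is supported in `[−R, R]`, then
`χ(X)ψ = ∫ χ̂(s) U s ψ ds` leaves `D(Y)` invariant and
`‖Y χ(X) ψ‖ ≤ e^{kR} ‖χ̂‖_{L¹} ‖Yψ‖` for all `ψ ∈ D(Y)`. -/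
theorem chiX_leaves_domain_invariant
    {H : Type*} [NormedAddCommGroup H] [InnerProductSpace ℂ H] [CompleteSpace H]
    (Y : H →ₗ.[ℂ] H) (hYclosed : Y.IsClosed)
    (hY1 : ∀ ψ : Y.domain, ‖(ψ : H)‖ ^ 2 ≤ (inner (𝕜 := ℂ) (ψ : H) (Y ψ)).re)
    (U : ℝ → (H →L[ℂ] H))
    (hU0 : U 0 = 1) (hUgroup : ∀ s t, U (s + t) = (U s).comp (U t))
    (hUiso : ∀ t (ψ : H), ‖U t ψ‖ = ‖ψ‖)
    (hUcont : ∀ ψ : H, Continuous fun t => U t ψ)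
    (k : ℝ) (hk : 0 ≤ k)
    (hinv : ∀ (t : ℝ) (ψ : Y.domain), U t (ψ : H) ∈ Y.domain)
    (hbound : ∀ (t : ℝ) (ψ : Y.domain),
      ‖Y ⟨U t (ψ : H), hinv t ψ⟩‖ ≤ Real.exp (k * |t|) * ‖Y ψ‖)
    (χhat : ℝ → ℂ) (hχint : Integrable χhat)
    (R : ℝ) (hR : 0 ≤ R)
    (hsupp : ∀ s, χhat s ≠ 0 → s ∈ Set.Icc (-R) R) :
    ∀ ψ : Y.domain,
      ∃ hmem : (∫ s, χhat s • U s (ψ : H)) ∈ Y.domain,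
        ‖Y ⟨∫ s, χhat s • U s (ψ : H), hmem⟩‖ ≤
          Real.exp (k * R) * (∫ s, ‖χhat s‖) * ‖Y ψ‖ :=
  chiX_leaves_domain_invariant_general Y hYclosed U hUiso hUcont k hk hinv hbound χhat hχint R hsupp
end

section
/- Let X be a selfadjoint operator on a Hilbert space H and Y ≥ 1 a selfadjoint operator such that e^{itX} leaves D(Y) invariant and ‖Y e^{itX}ψ‖ ≤ e^{k|t|}‖Yψ‖ for some k ≥ 0 and all ψ ∈ D(Y). Then for every z ∈ ℂ with |Im z| > k, the resolvent (X − z)^{-1} leaves D(Y) invariant. -/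
/-!
For `|Im z| > k` the resolvent applied to `ψ ∈ D(Y)` is a Laplace transform
`∫₀^∞ e^{-αt} h t dt` (`α > 0`) of a function `h` with values in `D(Y)` for which `‖h t‖` and
`‖Y (h t)‖ ≤ B` stay bounded. Up to the factor `α⁻¹` this is the mean of `h` under the
exponential distribution of rate `α`, so it lies in the set `{x ∈ D(Y) | ‖Y x‖ ≤ B}` as soon as
that set is closed and convex. Convexity is clear; closedness holds because the graph of `Y` is
closed and, in a Hilbert space, a decreasing sequence of nonempty bounded closed convex sets has
a common point (the points of least norm converge, by the parallelogram law).
Nothing is known about the measurability of `t ↦ Y (h t)`, so `Y` is never taken inside the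
integral.
-/

open Filter Set Metric MeasureTheory ProbabilityTheory

theorem norm_sub_sq_le_of_mem_convex {F : Type*} [NormedAddCommGroup F] [InnerProductSpace ℝ F]
    {K : Set F} (hK : Convex ℝ K) {d : ℝ} (hd0 : 0 ≤ d) (hd : ∀ z ∈ K, d ≤ ‖z‖)
    {x y : F} (hx : x ∈ K) (hy : y ∈ K) :
    ‖x - y‖ ^ 2 ≤ 2 * ‖x‖ ^ 2 + 2 * ‖y‖ ^ 2 - 4 * d ^ 2 := by
  have hmid : d ≤ ‖(1 / 2 : ℝ) • (x + y)‖ := by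
    refine hd _ ?_
    simpa only [smul_add] using hK hx hy (by norm_num) (by norm_num) (by norm_num)
  rw [norm_smul, Real.norm_of_nonneg (by norm_num)] at hmid
  nlinarith [parallelogram_law_with_norm ℝ x y]

theorem nonempty_iInter_of_antitone_of_convex {F : Type*} [NormedAddCommGroup F]
    [InnerProductSpace ℝ F] [CompleteSpace F] {C : ℕ → Set F} (hC : Antitone C)
    (hne : ∀ n, (C n).Nonempty) (hclosed : ∀ n, IsClosed (C n)) (hconv : ∀ n, Convex ℝ (C n))
    (hbdd : Bornology.IsBounded (C 0)) : (⋂ n, C n).Nonempty := by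
  have hmin n := exists_norm_eq_iInf_of_complete_convex (hne n) (hclosed n).isComplete (hconv n) 0
  choose x hxC hxnorm using hmin
  simp only [zero_sub, norm_neg] at hxnorm
  have hle : ∀ n, ∀ w ∈ C n, ‖x n‖ ≤ ‖w‖ := fun n w hw => by
    rw [hxnorm n]
    exact ciInf_le ⟨0, forall_mem_range.2 fun _ => norm_nonneg _⟩ (⟨w, hw⟩ : C n)
  have hmono : Monotone fun n => ‖x n‖ ^ 2 := fun m n hmn =>
    pow_le_pow_left₀ (norm_nonneg _) (hle m _ (hC hmn (hxC n))) 2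
  obtain ⟨B, hB⟩ := isBounded_iff_forall_norm_le.1 hbdd
  have hbddAbove : BddAbove (range fun n => ‖x n‖ ^ 2) := ⟨B ^ 2, forall_mem_range.2 fun n => by
    gcongr
    exact hB _ (hC (Nat.zero_le n) (hxC n))⟩
  have hcauchy : CauchySeq x := by
    rw [Metric.cauchySeq_iff']
    intro ε hε
    obtain ⟨N, hN⟩ := Metric.cauchySeq_iff'.1
      (tendsto_atTop_ciSup hmono hbddAbove).cauchySeq (ε ^ 2 / 2) (by positivity)
    refine ⟨N, fun n hn => ?_⟩
    have hsq := norm_sub_sq_le_of_mem_convex (hconv N) (norm_nonneg _) (hle N)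
      (hC hn (hxC n)) (hxC N)
    have hdist := hN n hn
    rw [Real.dist_eq, abs_lt] at hdist
    rw [dist_eq_norm]
    nlinarith [norm_nonneg (x n - x N)]
  obtain ⟨y, hy⟩ := cauchySeq_tendsto_of_complete hcauchy
  refine ⟨y, mem_iInter.2 fun N => (hclosed N).mem_of_tendsto hy ?_⟩
  filter_upwards [eventually_ge_atTop N] with n hn using hC hn (hxC n)

theorem LinearPMap.IsClosed.isClosed_setOf_norm_le {E F : Type*}
    [NormedAddCommGroup E] [InnerProductSpace ℂ E] [CompleteSpace E]
    [NormedAddCommGroup F] [InnerProductSpace ℂ F] [CompleteSpace F]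
    {Y : E →ₗ.[ℂ] F} (hY : Y.IsClosed) (C : ℝ) :
    _root_.IsClosed {x | ∃ hx : x ∈ Y.domain, ‖Y ⟨x, hx⟩‖ ≤ C} := by
  refine closure_subset_iff_isClosed.1 fun x hx => ?_
  let _ := InnerProductSpace.rclikeToReal ℂ (WithLp 2 (E × F))
  let S : ℝ → Set (WithLp 2 (E × F)) := fun r =>
    WithLp.ofLp ⁻¹' (Y.graph : Set (E × F)) ∩ WithLp.fst ⁻¹' closedBall x r ∩
      WithLp.snd ⁻¹' closedBall 0 C
  have hS : ∀ n : ℕ, (S (1 / (n + 1))).Nonempty := fun n => by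
    obtain ⟨x', ⟨hx', hYx'⟩, hdist⟩ := Metric.mem_closure_iff.1 hx _ Nat.one_div_pos_of_nat
    refine ⟨WithLp.toLp 2 (x', Y ⟨x', hx'⟩), ⟨Y.mem_graph ⟨x', hx'⟩, ?_⟩, ?_⟩
    · simpa [dist_comm] using hdist.le
    · simpa using hYx'
  have hanti : Antitone fun n : ℕ => S (1 / (n + 1)) := fun m n hmn =>
    inter_subset_inter_left _ <| inter_subset_inter_right _ <|
      preimage_mono <| closedBall_subset_closedBall <| Nat.one_div_le_one_div hmn
  have hclosed : ∀ r, _root_.IsClosed (S r) := fun r =>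
    ((hY.preimage (WithLp.prod_continuous_ofLp 2 E F)).inter
      (isClosed_closedBall.preimage (WithLp.continuous_fst 2 E F))).inter
      (isClosed_closedBall.preimage (WithLp.continuous_snd 2 E F))
  have hconv : ∀ r, Convex ℝ (S r) := fun r =>
    (((Y.graph.restrictScalars ℝ).convex.linear_preimage
      (WithLp.linearEquiv 2 ℝ (E × F)).toLinearMap).inter
      ((convex_closedBall _ _).linear_preimage (WithLp.fstₗ 2 ℝ E F))).inter
      ((convex_closedBall _ _).linear_preimage (WithLp.sndₗ 2 ℝ E F))
  have hbdd : Bornology.IsBounded (S 1) :=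
    ((WithLp.prod_antilipschitzWith_ofLp 2 E F).isBounded_preimage
      (isBounded_closedBall.prod isBounded_closedBall)).subset
      fun v hv => ⟨hv.1.2, hv.2⟩
  obtain ⟨v, hv⟩ := nonempty_iInter_of_antitone_of_convex hanti hS (fun n => hclosed _)
    (fun n => hconv _) (by simpa using hbdd)
  rw [mem_iInter] at hv
  have hfst : v.fst = x := eq_of_forall_dist_le fun ε hε => by
    obtain ⟨n, hn⟩ := exists_nat_one_div_lt hε
    exact (hv n).1.2.trans hn.le
  obtain ⟨⟨y, hyY⟩, hy, hYy⟩ := Y.mem_graph_iff.1 (hv 0).1.1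
  obtain rfl : y = x := hy.trans hfst
  exact ⟨hyY, by simpa [hYy] using (hv 0).2⟩

theorem LinearPMap.convex_setOf_norm_le {E F : Type*} [NormedAddCommGroup E] [NormedSpace ℂ E]
    [NormedAddCommGroup F] [NormedSpace ℂ F] (Y : E →ₗ.[ℂ] F) (C : ℝ) :
    Convex ℝ {x | ∃ hx : x ∈ Y.domain, ‖Y ⟨x, hx⟩‖ ≤ C} := by
  rintro u ⟨hu, hYu⟩ v ⟨hv, hYv⟩ a b ha hb hab
  let p : Y.domain := a • ⟨u, hu⟩ + b • ⟨v, hv⟩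
  refine ⟨p.2, ?_⟩
  have hYp : Y p = a • Y ⟨u, hu⟩ + b • Y ⟨v, hv⟩ := by
    simp only [p, Y.map_add, ← Complex.coe_smul, Y.map_smul]
  calc ‖Y p‖ ≤ a * ‖Y ⟨u, hu⟩‖ + b * ‖Y ⟨v, hv⟩‖ := by
        rw [hYp]
        refine (norm_add_le _ _).trans ?_
        rw [norm_smul, norm_smul, Real.norm_of_nonneg ha, Real.norm_of_nonneg hb]
    _ ≤ a * C + b * C := by gcongr
    _ = C := by rw [← add_mul, hab, one_mul]

theorem integral_expMeasure {E : Type*} [NormedAddCommGroup E] [NormedSpace ℝ E] {r : ℝ}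
    (hr : 0 < r) (g : ℝ → E) :
    ∫ t, g t ∂expMeasure r = ∫ t in Ioi 0, (r * Real.exp (-(r * t))) • g t := by
  change ∫ t, g t ∂(volume.withDensity (exponentialPDF r)) = _
  have hmeas : Measurable (exponentialPDF r) := (measurable_exponentialPDFReal r).ennreal_ofReal
  rw [integral_withDensity_eq_integral_toReal_smul hmeas
    (ae_of_all _ fun _ => ENNReal.ofReal_lt_top), ← integral_Ici_eq_integral_Ioi,
    ← integral_indicator measurableSet_Ici]
  congr 1 with t
  rcases lt_or_ge t 0 with ht | ht
  · simp [exponentialPDF_of_neg ht, ht]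
  · rw [exponentialPDF_of_nonneg ht, ENNReal.toReal_ofReal (by positivity),
      indicator_of_mem (mem_Ici.2 ht)]

theorem ae_nonneg_expMeasure (r : ℝ) : ∀ᵐ t ∂expMeasure r, 0 ≤ t := by
  rw [ae_iff]
  simp only [not_le]
  exact (withDensity_apply _ measurableSet_Iio).trans (lintegral_exponentialPDF_of_nonpos le_rfl)

theorem LinearPMap.IsClosed.integral_exp_smul_mem_domain {E F : Type*}
    [NormedAddCommGroup E] [InnerProductSpace ℂ E] [CompleteSpace E]
    [NormedAddCommGroup F] [InnerProductSpace ℂ F] [CompleteSpace F]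
    {Y : E →ₗ.[ℂ] F} (hY : Y.IsClosed) {h : ℝ → E} (hh : AEStronglyMeasurable h)
    {α A B : ℝ} (hα : 0 < α) (hnorm : ∀ t, 0 ≤ t → ‖h t‖ ≤ A)
    (hdom : ∀ t, 0 ≤ t → ∃ ht : h t ∈ Y.domain, ‖Y ⟨h t, ht⟩‖ ≤ B) :
    ∫ t in Ioi 0, Real.exp (-(α * t)) • h t ∈ Y.domain := by
  have := isProbabilityMeasure_expMeasure hα
  have hmean : ∫ t, h t ∂expMeasure α ∈ {x | ∃ hx : x ∈ Y.domain, ‖Y ⟨x, hx⟩‖ ≤ B} :=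
    (Y.convex_setOf_norm_le B).integral_mem (hY.isClosed_setOf_norm_le B)
      ((ae_nonneg_expMeasure α).mono fun t ht => hdom t ht)
      (.of_bound (hh.mono_ac (withDensity_absolutelyContinuous _ _)) A
        ((ae_nonneg_expMeasure α).mono fun t ht => hnorm t ht))
  rw [integral_expMeasure hα] at hmean
  simp_rw [mul_smul] at hmean
  rw [integral_smul] at hmean
  simpa [hα.ne'] using Y.domain.smul_of_tower_mem α⁻¹ hmean.1

theorem LinearPMap.IsClosed.integral_cexp_smul_mem_domain {E F : Type*}
    [NormedAddCommGroup E] [InnerProductSpace ℂ E] [CompleteSpace E]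
    [NormedAddCommGroup F] [InnerProductSpace ℂ F] [CompleteSpace F]
    {Y : E →ₗ.[ℂ] F} (hY : Y.IsClosed) {v : ℝ → E} (hv : AEStronglyMeasurable v)
    {w : ℂ} {k A B : ℝ} (hw : w.re + k < 0)
    (hnorm : ∀ t, 0 ≤ t → ‖v t‖ ≤ A * Real.exp (k * t))
    (hdom : ∀ t, 0 ≤ t → ∃ ht : v t ∈ Y.domain, ‖Y ⟨v t, ht⟩‖ ≤ B * Real.exp (k * t)) :
    ∫ t in Ioi (0 : ℝ), Complex.exp (w * t) • v t ∈ Y.domain := by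
  set α := -(w.re + k)
  -- Split off the decay `e^{-αt}`; what remains has `|e^{(w + α) t}| = e^{-kt}`.
  set c : ℝ → ℂ := fun t => Complex.exp ((w + α) * t)
  have hc : ∀ t : ℝ, ∀ {M x : ℝ}, x ≤ M * Real.exp (k * t) → ‖c t‖ * x ≤ M := fun t M x hx => by
    have hct : ‖c t‖ * Real.exp (k * t) = 1 := by
      simp only [c, Complex.norm_exp, ← Real.exp_add]
      simp [α]
    calc ‖c t‖ * x ≤ ‖c t‖ * (M * Real.exp (k * t)) := by gcongr
      _ = M := by rw [mul_left_comm, hct, mul_one]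
  have hsplit : ∀ t : ℝ, Complex.exp (w * t) • v t = Real.exp (-(α * t)) • c t • v t := fun t => by
    rw [← Complex.coe_smul, smul_smul, Complex.ofReal_exp, ← Complex.exp_add]
    push_cast
    ring_nf
  simp_rw [hsplit]
  refine hY.integral_exp_smul_mem_domain (h := fun t => c t • v t) (A := A) (B := B)
    ((by fun_prop : Continuous c).aestronglyMeasurable.smul hv) (by linarith)
    (fun t ht => ?_) (fun t ht => ?_)
  · rw [norm_smul]
    exact hc t (hnorm t ht)
  · obtain ⟨hvt, hYv⟩ := hdom t ht
    refine ⟨Y.domain.smul_mem _ hvt, ?_⟩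
    rw [show (⟨c t • v t, _⟩ : Y.domain) = c t • ⟨v t, hvt⟩ from rfl, Y.map_smul, norm_smul]
    exact hc t hYv

theorem resolvent_leaves_domain_invariant_general
    {H : Type*} [NormedAddCommGroup H] [InnerProductSpace ℂ H] [CompleteSpace H]
    (Y : H →ₗ.[ℂ] H) (hYclosed : Y.IsClosed)
    (U : ℝ → (H →L[ℂ] H))
    (hUiso : ∀ t (ψ : H), ‖U t ψ‖ = ‖ψ‖)
    (hUcont : ∀ ψ : H, Continuous fun t => U t ψ)
    (k : ℝ) (hk : 0 ≤ k)
    (hinv : ∀ (t : ℝ) (ψ : Y.domain), U t (ψ : H) ∈ Y.domain)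
    (hbound : ∀ (t : ℝ) (ψ : Y.domain),
      ‖Y ⟨U t (ψ : H), hinv t ψ⟩‖ ≤ Real.exp (k * |t|) * ‖Y ψ‖)
    -- the resolvent family of the generator `X` of `U`:
    (Res : ℂ → (H →L[ℂ] H))
    (hResLow : ∀ z : ℂ, z.im < -k → ∀ ψ : H,
      Res z ψ = Complex.I • ∫ t in Set.Ioi (0:ℝ),
        Complex.exp (-(Complex.I * z * t)) • U t ψ)
    (hResHigh : ∀ z : ℂ, (k : ℝ) < z.im → ∀ ψ : H,
      Res z ψ = (-Complex.I) • ∫ t in Set.Ioi (0:ℝ),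
        Complex.exp (Complex.I * z * t) • U (-t) ψ) :
    ∀ z : ℂ, k < |z.im| → ∀ ψ : H, ψ ∈ Y.domain → Res z ψ ∈ Y.domain := by
  intro z hz ψ hψ
  have hnorm : ∀ t, ‖U t ψ‖ ≤ ‖ψ‖ * Real.exp (k * |t|) := fun t =>
    (hUiso t ψ).trans_le <| le_mul_of_one_le_right (norm_nonneg ψ) <|
      Real.one_le_exp (mul_nonneg hk (abs_nonneg t))
  have hdom : ∀ t, ∃ h : U t ψ ∈ Y.domain, ‖Y ⟨U t ψ, h⟩‖ ≤ ‖Y ⟨ψ, hψ⟩‖ * Real.exp (k * |t|) :=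
    fun t => ⟨hinv t ⟨ψ, hψ⟩, (hbound t ⟨ψ, hψ⟩).trans_eq (mul_comm _ _)⟩
  rcases lt_or_ge z.im 0 with him | him
  · rw [abs_of_neg him] at hz
    rw [hResLow z (by linarith) ψ]
    refine Y.domain.smul_mem _ ?_
    simp_rw [← neg_mul]
    refine hYclosed.integral_cexp_smul_mem_domain (hUcont ψ).aestronglyMeasurable ?_
      (fun t ht => by simpa [abs_of_nonneg ht] using hnorm t)
      (fun t ht => by simpa [abs_of_nonneg ht] using hdom t)
    simp only [Complex.mul_re, Complex.neg_re, Complex.neg_im, Complex.I_re, Complex.I_im]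
    linarith
  · rw [abs_of_nonneg him] at hz
    rw [hResHigh z hz ψ]
    refine Y.domain.smul_mem _ ?_
    refine hYclosed.integral_cexp_smul_mem_domain
      ((hUcont ψ).comp continuous_neg).aestronglyMeasurable ?_
      (fun t ht => by simpa [abs_of_nonneg ht] using hnorm (-t))
      (fun t ht => by simpa [abs_of_nonneg ht] using hdom (-t))
    simp only [Complex.mul_re, Complex.I_re, Complex.I_im]
    linarith

/-- **Invariance of `D(Y)` under resolvents of `X`** (Proposition 5.6 of Fröhlich–Merkli).
Let `Y ≥ 1` be selfadjoint (closed), and let `U t = e^{itX}` be the unitary group of a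
selfadjoint operator `X` leaving `D(Y)` invariant with `‖Y U t ψ‖ ≤ e^{k|t|}‖Yψ‖`.  The
resolvent `Res z = (X − z)^{-1}`, which for `|Im z| > k` has the Laplace-transform
representations `Res z = i∫₀^∞ e^{-izt} U t dt` (`Im z < -k`) and
`Res z = -i∫₀^∞ e^{izt} U (−t) dt` (`Im z > k`), leaves `D(Y)` invariant for all such `z`. -/
theorem resolvent_leaves_domain_invariant
    {H : Type*} [NormedAddCommGroup H] [InnerProductSpace ℂ H] [CompleteSpace H]
    (Y : H →ₗ.[ℂ] H) (hYclosed : Y.IsClosed)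
    (hY1 : ∀ ψ : Y.domain, ‖(ψ : H)‖ ^ 2 ≤ (inner (𝕜 := ℂ) (ψ : H) (Y ψ)).re)
    (U : ℝ → (H →L[ℂ] H))
    (hU0 : U 0 = 1) (hUgroup : ∀ s t, U (s + t) = (U s).comp (U t))
    (hUiso : ∀ t (ψ : H), ‖U t ψ‖ = ‖ψ‖)
    (hUcont : ∀ ψ : H, Continuous fun t => U t ψ)
    (k : ℝ) (hk : 0 ≤ k)
    (hinv : ∀ (t : ℝ) (ψ : Y.domain), U t (ψ : H) ∈ Y.domain)
    (hbound : ∀ (t : ℝ) (ψ : Y.domain),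
      ‖Y ⟨U t (ψ : H), hinv t ψ⟩‖ ≤ Real.exp (k * |t|) * ‖Y ψ‖)
    -- the resolvent family of the generator `X` of `U`:
    (Res : ℂ → (H →L[ℂ] H))
    (hResLow : ∀ z : ℂ, z.im < -k → ∀ ψ : H,
      Res z ψ = Complex.I • ∫ t in Set.Ioi (0:ℝ),
        Complex.exp (-(Complex.I * z * t)) • U t ψ)
    (hResHigh : ∀ z : ℂ, (k : ℝ) < z.im → ∀ ψ : H,
      Res z ψ = (-Complex.I) • ∫ t in Set.Ioi (0:ℝ),
        Complex.exp (Complex.I * z * t) • U (-t) ψ) :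
    ∀ z : ℂ, k < |z.im| → ∀ ψ : H, ψ ∈ Y.domain → Res z ψ ∈ Y.domain :=
  resolvent_leaves_domain_invariant_general Y hYclosed U hUiso hUcont k hk hinv hbound Res hResLow
    hResHigh
end
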